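/- Fix $C \ge 1$, $a, b > 0$, and $0 < \alpha < 1$ with $\frac{a + (C-1)b}{C} < 1 - \alpha$. Then the conclusion of the isolated-vertex lemma applied with threshold $1-\alpha$ gives: in the SBM graph $G_1\cap G_2 \sim SBM(n, \frac{a s_1 s_2 \log n}{n}, \frac{b s_1 s_2 \log n}{n})$ with the condition $\frac{(a+(C-1)b)s_1 s_2}{C} < 1 - \alpha$, each community contains at least $\frac{n^{\alpha}}{2C}$ isolated vertices with probability $1 - o(1)$, and therefore at least $\alpha \log_2 n \cdot (1 - o(1))$ bits of uncertainty remain about the identity of each such vertex under any estimator: any estimator of the position of a given isolated vertex succeeds with probability at most $\frac{2C}{n^{\alpha}}$. -/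

import Mathlib

/-!
A vertex is isolated with probability `ρ = (1 - p) ^ (m - 1) * (1 - q) ^ ((C - 1) m)`, and two
vertices of one community are both isolated with probability `ρ² / (1 - p)` (they share one
edge). So the number of isolated vertices of a community has mean `m ρ` and variance at most
`m ρ + (m ρ)² p / (1 - p)`, and Chebyshev bounds the probability that it drops below `m ρ / 2`
by `4 / (m ρ) + 4 p / (1 - p)`. From `1 - x ≥ exp (-x / (1 - ε))` for `0 ≤ x ≤ ε` we get
`ρ ≥ n ^ (-c / (1 - ε))` with `c = (a + (C - 1) b) s₁ s₂ / C`, which is at least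
`n ^ (α - 1)` once `ε` is small; hence `m ρ ≥ n ^ α / C → ∞`, and a union bound over the `C`
communities gives the first claim. The other two claims are arithmetic:
`log₂ (n ^ α / 2C) = α log₂ n - log₂ 2C`, and the uniform distribution on at least `n ^ α / 2C`
points gives each point mass at most `2C / n ^ α`.
-/

open MeasureTheory Filter
open scoped ENNReal

/-- Edge probability for the SBM on `[n]`: `p` for intra-community pairs, `q` for
inter-community pairs (communities `{i : i.val / nC = k}` of size `nC`). -/
noncomputable def edgeP (n : ℕ) (p q : ℝ) (nC : ℕ) (e : Sym2 (Fin n)) : ℝ≥0∞ :=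
  min (ENNReal.ofReal
    (Sym2.lift ⟨fun i j => if i.val / nC = j.val / nC then p else q,
      fun i j => by simp only [eq_comm]⟩ e)) 1

/-- The stochastic block model `SBM(n, p, q)` with communities of size `nC`. -/
noncomputable def sbm (n : ℕ) (p q : ℝ) (nC : ℕ) :
    Measure (Sym2 (Fin n) → Bool) :=
  Measure.pi fun e => (PMF.bernoulli (edgeP n p q nC e).toNNReal
    (by simpa using ENNReal.toNNReal_mono ENNReal.one_ne_top (show edgeP n p q nC e ≤ 1 from min_le_right _ _))).toMeasure

/-- The number of isolated vertices in community `k`. -/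
noncomputable def isoCount (n nC k : ℕ) (ω : Sym2 (Fin n) → Bool) : ℕ :=
  (Finset.univ.filter fun i : Fin n =>
    i.val / nC = k ∧ ∀ j : Fin n, j ≠ i → ω s(i, j) = false).card

open Finset ProbabilityTheory

open Classical in
theorem measure_card_mem_lt_half_le {Ω ι : Type*} [MeasurableSpace Ω] (μ : Measure Ω)
    [IsProbabilityMeasure μ] (K : Finset ι) (hK : K.Nonempty) (A : ι → Set Ω)
    (hA : ∀ i, MeasurableSet (A i)) {r s : ℝ} (hr : 0 < r) (hs : 0 ≤ s)
    (hAr : ∀ i ∈ K, μ.real (A i) = r)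
    (hAs : ∀ i ∈ K, ∀ j ∈ K, i ≠ j → μ.real (A i ∩ A j) ≤ s) :
    μ {ω | (#{i ∈ K | ω ∈ A i} : ℝ) < #K * r / 2} ≤
      ENNReal.ofReal (4 / (#K * r) + 4 * (s / r ^ 2 - 1)) := by
  set k : ℝ := (#K : ℝ)
  have hk : 0 < k := Nat.cast_pos.mpr hK.card_pos
  have hintegrable (B : Set Ω) (hB : MeasurableSet B) :
      Integrable (B.indicator (1 : Ω → ℝ)) μ :=
    (integrable_const (1 : ℝ)).indicator hB
  set X : Ω → ℝ := fun ω => ∑ i ∈ K, (A i).indicator 1 ω with hXdef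
  have hX (ω : Ω) : X ω = #{i ∈ K | ω ∈ A i} := by
    simp [X, Set.indicator_apply]
  have hXL2 : MemLp X 2 μ := memLp_finsetSum K fun i _ => (memLp_const (1 : ℝ)).indicator (hA i)
  have hmean : μ[X] = k * r := by
    rw [hXdef, integral_finsetSum K fun i _ => hintegrable _ (hA i),
      sum_congr rfl fun i hi => (integral_indicator_one (hA i)).trans (hAr i hi), sum_const,
      nsmul_eq_mul]
  have hrow : ∀ i ∈ K, ∑ j ∈ K, μ.real (A i ∩ A j) ≤ r + (k - 1) * s := by
    intro i hi
    rw [← add_sum_erase K _ hi, Set.inter_self, hAr i hi]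
    gcongr
    calc ∑ j ∈ K.erase i, μ.real (A i ∩ A j) ≤ ∑ j ∈ K.erase i, s :=
          sum_le_sum fun j hj => hAs i hi j (mem_of_mem_erase hj) (ne_of_mem_erase hj).symm
      _ = (k - 1) * s := by
          rw [sum_const, card_erase_of_mem hi, nsmul_eq_mul, Nat.cast_pred hK.card_pos]
  have hsecond : μ[X ^ 2] ≤ k * r + k * (k - 1) * s := by
    have hsq : X ^ 2 = fun ω => ∑ i ∈ K, ∑ j ∈ K, (A i ∩ A j).indicator 1 ω := by
      ext ω
      simp only [X, Pi.pow_apply, sq, sum_mul_sum, Set.inter_indicator_one, Pi.mul_apply]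
    have hent (i j : ι) : ∫ ω, (A i ∩ A j).indicator 1 ω ∂μ = μ.real (A i ∩ A j) :=
      integral_indicator_one ((hA i).inter (hA j))
    rw [hsq, integral_finsetSum K fun i _ => integrable_finsetSum K fun j _ =>
      hintegrable _ ((hA i).inter (hA j))]
    simp_rw [integral_finsetSum K fun j _ => hintegrable _ ((hA _).inter (hA j)), hent]
    calc ∑ i ∈ K, ∑ j ∈ K, μ.real (A i ∩ A j) ≤ ∑ i ∈ K, (r + (k - 1) * s) :=
          sum_le_sum hrow
      _ = k * r + k * (k - 1) * s := by rw [sum_const, nsmul_eq_mul]; ring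
  have hvar : variance X μ ≤ k * r + k ^ 2 * (s - r ^ 2) := by
    rw [variance_eq_sub hXL2, hmean]
    nlinarith [mul_nonneg hk.le hs]
  have hkr : 0 < k * r := mul_pos hk hr
  calc μ {ω | (#{i ∈ K | ω ∈ A i} : ℝ) < k * r / 2}
      ≤ μ {ω | k * r / 2 ≤ |X ω - μ[X]|} := by
        refine measure_mono fun ω hω => ?_
        simp only [Set.mem_ofPred_eq, ← hX, hmean] at hω ⊢
        rw [abs_sub_comm, abs_of_pos (by linarith)]
        linarith
    _ ≤ ENNReal.ofReal (variance X μ / (k * r / 2) ^ 2) :=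
        meas_ge_le_variance_div_sq hXL2 (by positivity)
    _ ≤ ENNReal.ofReal (4 / (k * r) + 4 * (s / r ^ 2 - 1)) := by
        refine ENNReal.ofReal_le_ofReal ?_
        calc variance X μ / (k * r / 2) ^ 2
            ≤ (k * r + k ^ 2 * (s - r ^ 2)) / (k * r / 2) ^ 2 := by gcongr
          _ = 4 / (k * r) + 4 * (s / r ^ 2 - 1) := by field_simp; ring

instance (n : ℕ) (p q : ℝ) (nC : ℕ) : IsProbabilityMeasure (sbm n p q nC) := by
  unfold sbm; infer_instance

theorem sbm_forall_mem_eq_false (n : ℕ) (p q : ℝ) (nC : ℕ) (F : Finset (Sym2 (Fin n))) :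
    sbm n p q nC {ω | ∀ e ∈ F, ω e = false} = ∏ e ∈ F, (1 - edgeP n p q nC e) := by
  classical
  have hset : {ω : Sym2 (Fin n) → Bool | ∀ e ∈ F, ω e = false} =
      Set.univ.pi fun e => if e ∈ F then {false} else Set.univ := by
    ext ω
    simp only [Set.mem_ofPred_eq, Set.mem_pi, Set.mem_univ, true_imp_iff]
    exact forall_congr' fun e => by by_cases he : e ∈ F <;> simp [he]
  rw [sbm, hset, Measure.pi_pi, ← Fintype.prod_ite_mem F (fun e => 1 - edgeP n p q nC e)]
  refine Fintype.prod_congr _ _ fun e => ?_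
  split_ifs
  · have hne : edgeP n p q nC e ≠ ⊤ :=
      ne_top_of_le_ne_top ENNReal.one_ne_top (min_le_right _ _)
    rw [PMF.toMeasure_apply_singleton _ _ (measurableSet_singleton _)]
    exact (PMF.bernoulli_apply _ false).trans (by simp [ENNReal.coe_sub, ENNReal.coe_toNNReal hne])
  · exact measure_univ

theorem one_sub_edgeP_mk {n : ℕ} {p q : ℝ} (nC : ℕ) (hp : 0 ≤ p) (hp1 : p ≤ 1)
    (hq : 0 ≤ q) (hq1 : q ≤ 1) (i j : Fin n) :
    1 - edgeP n p q nC s(i, j) =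
      if i.val / nC = j.val / nC then ENNReal.ofReal (1 - p) else ENNReal.ofReal (1 - q) := by
  rw [edgeP, Sym2.lift_mk]
  dsimp only
  split_ifs
  · rw [min_eq_left (ENNReal.ofReal_le_one.mpr hp1), ENNReal.ofReal_sub _ hp, ENNReal.ofReal_one]
  · rw [min_eq_left (ENNReal.ofReal_le_one.mpr hq1), ENNReal.ofReal_sub _ hq, ENNReal.ofReal_one]

theorem card_filter_val_div_eq {C m k : ℕ} (hm : 0 < m) (hk : k < C) :
    #{i : Fin (C * m) | i.val / m = k} = m := by
  have hdiv (x : Fin C × Fin m) : (x.2.val + m * x.1.val) / m = x.1.val := by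
    rw [Nat.add_mul_div_left _ _ hm, Nat.div_eq_of_lt x.2.isLt, zero_add]
  have hfst : ({x | x.1.val = k} : Finset (Fin C × Fin m)) = {⟨k, hk⟩} ×ˢ univ := by
    ext ⟨x, y⟩
    simp only [mem_filter, mem_univ, true_and, mem_product, mem_singleton, and_true, Fin.ext_iff]
  rw [← card_map finProdFinEquiv.symm.toEmbedding, map_filter]
  simp [hdiv, hfst]

theorem prod_erase_ite_val_div_eq {M : Type*} [CommMonoid M] {C m : ℕ} (hm : 0 < m)
    (i : Fin (C * m)) (x y : M) :
    ∏ j ∈ univ.erase i, (if i.val / m = j.val / m then x else y) =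
      x ^ (m - 1) * y ^ (C * m - m) := by
  have hi : i.val / m < C := Nat.div_lt_of_lt_mul (by simp [mul_comm])
  have hsame : #{j ∈ univ.erase i | i.val / m = j.val / m} = m - 1 := by
    rw [filter_erase, card_erase_of_mem (by simp)]
    simp_rw [eq_comm (a := i.val / m)]
    rw [card_filter_val_div_eq hm hi]
  have hother : #{j ∈ univ.erase i | ¬i.val / m = j.val / m} = C * m - m := by
    have := card_filter_add_card_filter_not (s := univ.erase i)
      (p := fun j => i.val / m = j.val / m)
    rw [hsame, card_erase_of_mem (mem_univ i), card_univ, Fintype.card_fin] at this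
    omega
  rw [prod_ite, prod_const, prod_const, hsame, hother]

section Isolation

variable {n : ℕ}

def incidentEdges (i : Fin n) : Finset (Sym2 (Fin n)) :=
  (univ.erase i).image (s(i, ·))

def isolated (i : Fin n) : Set (Sym2 (Fin n) → Bool) :=
  {ω | ∀ j, j ≠ i → ω s(i, j) = false}

theorem isolated_eq_setOf_incidentEdges (i : Fin n) :
    isolated i = {ω | ∀ e ∈ incidentEdges i, ω e = false} := by
  ext ω
  simp [isolated, incidentEdges]

theorem isolated_inter_isolated (i j : Fin n) :
    isolated i ∩ isolated j =
      {ω | ∀ e ∈ incidentEdges i ∪ incidentEdges j, ω e = false} := by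
  ext ω
  simp only [isolated_eq_setOf_incidentEdges, Set.mem_inter_iff, Set.mem_ofPred_eq, mem_union,
    or_imp, forall_and]

theorem incidentEdges_inter {i j : Fin n} (hij : i ≠ j) :
    incidentEdges i ∩ incidentEdges j = {s(i, j)} := by
  ext e
  simp only [incidentEdges, mem_inter, mem_image, mem_erase, mem_univ, and_true, mem_singleton]
  constructor
  · rintro ⟨⟨u, -, rfl⟩, v, -, hvu⟩
    rcases Sym2.eq_iff.mp hvu with ⟨rfl, -⟩ | ⟨rfl, rfl⟩
    · exact absurd rfl hij
    · rfl
  · rintro rfl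
    exact ⟨⟨j, hij.symm, rfl⟩, i, hij, Sym2.eq_swap⟩

theorem prod_incidentEdges {M : Type*} [CommMonoid M] (i : Fin n) (f : Sym2 (Fin n) → M) :
    ∏ e ∈ incidentEdges i, f e = ∏ j ∈ univ.erase i, f s(i, j) :=
  prod_image fun _ _ _ _ h => Sym2.congr_right.mp h

theorem measurableSet_isolated (i : Fin n) : MeasurableSet (isolated i) :=
  (Set.to_countable _).measurableSet

open Classical in
theorem isoCount_eq_card_isolated (nC k : ℕ) (ω : Sym2 (Fin n) → Bool) :
    isoCount n nC k ω = #{i ∈ {i : Fin n | i.val / nC = k} | ω ∈ isolated i} := by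
  rw [isoCount, filter_filter]
  congr

end Isolation

def isolationProb (p q : ℝ) (C m : ℕ) : ℝ :=
  (1 - p) ^ (m - 1) * (1 - q) ^ (C * m - m)

section IsolationProb

variable {p q : ℝ} {C m : ℕ}

theorem isolationProb_nonneg (hp1 : p ≤ 1) (hq1 : q ≤ 1) : 0 ≤ isolationProb p q C m :=
  mul_nonneg (pow_nonneg (sub_nonneg.mpr hp1) _) (pow_nonneg (sub_nonneg.mpr hq1) _)

theorem isolationProb_pos (hp1 : p < 1) (hq1 : q < 1) : 0 < isolationProb p q C m :=
  mul_pos (pow_pos (sub_pos.mpr hp1) _) (pow_pos (sub_pos.mpr hq1) _)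

theorem sbm_isolated (hm : 0 < m) (hp : 0 ≤ p) (hp1 : p ≤ 1) (hq : 0 ≤ q) (hq1 : q ≤ 1)
    (i : Fin (C * m)) :
    sbm (C * m) p q m (isolated i) = ENNReal.ofReal (isolationProb p q C m) := by
  rw [isolated_eq_setOf_incidentEdges, sbm_forall_mem_eq_false, prod_incidentEdges]
  simp_rw [one_sub_edgeP_mk m hp hp1 hq hq1, prod_erase_ite_val_div_eq hm]
  rw [isolationProb, ENNReal.ofReal_mul (pow_nonneg (by linarith) _),
    ENNReal.ofReal_pow (by linarith), ENNReal.ofReal_pow (by linarith)]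

theorem sbm_real_isolated_inter_isolated (hm : 0 < m) (hp : 0 ≤ p) (hp1 : p < 1) (hq : 0 ≤ q)
    (hq1 : q ≤ 1) {i j : Fin (C * m)} (hij : i ≠ j) (hcom : i.val / m = j.val / m) :
    (sbm (C * m) p q m).real (isolated i ∩ isolated j) = isolationProb p q C m ^ 2 / (1 - p) := by
  have hshared : 1 - edgeP (C * m) p q m s(i, j) = ENNReal.ofReal (1 - p) := by
    rw [one_sub_edgeP_mk m hp hp1.le hq hq1, if_pos hcom]
  have key : sbm (C * m) p q m (isolated i ∩ isolated j) * ENNReal.ofReal (1 - p) =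
      sbm (C * m) p q m (isolated i) * sbm (C * m) p q m (isolated j) := by
    rw [isolated_inter_isolated, isolated_eq_setOf_incidentEdges i,
      isolated_eq_setOf_incidentEdges j, sbm_forall_mem_eq_false, sbm_forall_mem_eq_false,
      sbm_forall_mem_eq_false, ← hshared,
      ← prod_singleton (fun e => 1 - edgeP (C * m) p q m e) s(i, j), ← incidentEdges_inter hij]
    exact prod_union_inter
  rw [sbm_isolated hm hp hp1.le hq hq1, sbm_isolated hm hp hp1.le hq hq1] at key
  have hreal := congrArg ENNReal.toReal key
  rw [ENNReal.toReal_mul, ENNReal.toReal_mul, ENNReal.toReal_ofReal (sub_nonneg.mpr hp1.le),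
    ENNReal.toReal_ofReal (isolationProb_nonneg hp1.le hq1)] at hreal
  rw [eq_div_iff (sub_pos.mpr hp1).ne', measureReal_def, hreal, sq]

end IsolationProb

theorem sbm_isoCount_lt_half_le {p q : ℝ} {C m k : ℕ} (hm : 0 < m) (hk : k < C) (hp : 0 ≤ p)
    (hp1 : p < 1) (hq : 0 ≤ q) (hq1 : q < 1) :
    sbm (C * m) p q m {ω | (isoCount (C * m) m k ω : ℝ) < m * isolationProb p q C m / 2} ≤
      ENNReal.ofReal (4 / (m * isolationProb p q C m) + 4 * (p / (1 - p))) := by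
  have hρ := isolationProb_pos (C := C) (m := m) hp1 hq1
  have hK := card_filter_val_div_eq hm hk
  have hKne : ({i : Fin (C * m) | i.val / m = k} : Finset _).Nonempty := by
    rw [← card_pos, hK]; exact hm
  have bound := measure_card_mem_lt_half_le (sbm (C * m) p q m) _ hKne isolated
    measurableSet_isolated hρ (by have := sub_pos.mpr hp1; positivity)
    (fun i _ => by rw [measureReal_def, sbm_isolated hm hp hp1.le hq hq1.le,
      ENNReal.toReal_ofReal hρ.le])
    (fun i hi j hj hij => (sbm_real_isolated_inter_isolated hm hp hp1 hq hq1.le hij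
      (((mem_filter.mp hi).2).trans (mem_filter.mp hj).2.symm)).le)
  have hs : isolationProb p q C m ^ 2 / (1 - p) / isolationProb p q C m ^ 2 - 1 = p / (1 - p) := by
    have := sub_pos.mpr hp1
    field_simp
    ring
  simpa only [hK, hs, ← isoCount_eq_card_isolated] using bound

theorem sbm_exists_isoCount_lt_le {p q T : ℝ} {C m : ℕ} (hm : 0 < m) (hp : 0 ≤ p)
    (hp1 : p ≤ 1 / 2) (hq : 0 ≤ q) (hq1 : q < 1) (hT : T ≤ m * isolationProb p q C m / 2) :
    sbm (C * m) p q m {ω | ∃ k < C, (isoCount (C * m) m k ω : ℝ) < T} ≤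
      ENNReal.ofReal (C * (4 / (m * isolationProb p q C m) + 8 * p)) := by
  have hunion : {ω | ∃ k < C, (isoCount (C * m) m k ω : ℝ) < T} =
      ⋃ k ∈ range C, {ω | (isoCount (C * m) m k ω : ℝ) < T} := by
    ext ω; simp
  have hodds : p / (1 - p) ≤ 2 * p := by
    rw [div_le_iff₀ (by linarith)]; nlinarith
  calc sbm (C * m) p q m {ω | ∃ k < C, (isoCount (C * m) m k ω : ℝ) < T}
      ≤ ∑ k ∈ range C, sbm (C * m) p q m {ω | (isoCount (C * m) m k ω : ℝ) < T} := by
        rw [hunion]; exact measure_biUnion_finset_le _ _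
    _ ≤ ∑ k ∈ range C, ENNReal.ofReal (4 / (m * isolationProb p q C m) + 8 * p) := by
        refine sum_le_sum fun k hk => ?_
        refine (measure_mono fun ω (hω : _ < T) => hω.trans_le hT).trans
          ((sbm_isoCount_lt_half_le hm (mem_range.mp hk) hp (by linarith) hq hq1).trans
          (ENNReal.ofReal_le_ofReal (by linarith)))
    _ = ENNReal.ofReal (C * (4 / (m * isolationProb p q C m) + 8 * p)) := by
        rw [sum_const, card_range, nsmul_eq_mul, ENNReal.ofReal_mul (Nat.cast_nonneg C),
          ENNReal.ofReal_natCast]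

theorem exp_neg_div_le_one_sub {x ε : ℝ} (hx : 0 ≤ x) (hxε : x ≤ ε) (hε : ε < 1) :
    Real.exp (-(x / (1 - ε))) ≤ 1 - x := by
  have h1x : 0 < 1 - x := by linarith
  calc Real.exp (-(x / (1 - ε))) ≤ Real.exp (1 - (1 - x)⁻¹) := by
        rw [show 1 - (1 - x)⁻¹ = -(x / (1 - x)) by field_simp; ring]
        gcongr
    _ ≤ Real.exp (Real.log (1 - x)) := Real.exp_le_exp.mpr (Real.one_sub_inv_le_log_of_pos h1x)
    _ = 1 - x := Real.exp_log h1x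

theorem exp_neg_mul_div_le_one_sub_pow {x ε K : ℝ} {k : ℕ} (hx : 0 ≤ x) (hxε : x ≤ ε)
    (hε : ε < 1) (hk : (k : ℝ) ≤ K) : Real.exp (-(K * x / (1 - ε))) ≤ (1 - x) ^ k := by
  have hkK : k * (x / (1 - ε)) ≤ K * (x / (1 - ε)) :=
    mul_le_mul_of_nonneg_right hk (div_nonneg hx (by linarith))
  calc Real.exp (-(K * x / (1 - ε))) ≤ Real.exp (k * -(x / (1 - ε))) :=
        Real.exp_le_exp.mpr (by rw [mul_div_assoc]; linarith)
    _ = Real.exp (-(x / (1 - ε))) ^ k := Real.exp_nat_mul _ k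
    _ ≤ (1 - x) ^ k :=
        pow_le_pow_left₀ (Real.exp_nonneg _) (exp_neg_div_le_one_sub hx hxε hε) k

theorem exp_neg_le_isolationProb {p q ε : ℝ} {C m : ℕ} (hC : 0 < C) (hp : 0 ≤ p)
    (hpε : p ≤ ε) (hq : 0 ≤ q) (hqε : q ≤ ε) (hε : ε < 1) :
    Real.exp (-((m * p + (C - 1) * m * q) / (1 - ε))) ≤ isolationProb p q C m := by
  have hm1 : ((m - 1 : ℕ) : ℝ) ≤ m := by exact_mod_cast Nat.sub_le m 1
  have hCm : ((C * m - m : ℕ) : ℝ) ≤ (C - 1) * m := by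
    rw [Nat.cast_sub (Nat.le_mul_of_pos_left m hC)]
    push_cast
    linarith
  rw [add_div, neg_add, Real.exp_add, isolationProb]
  exact mul_le_mul (exp_neg_mul_div_le_one_sub_pow hp hpε hε hm1)
    (exp_neg_mul_div_le_one_sub_pow hq hqε hε hCm) (Real.exp_nonneg _)
    (pow_nonneg (by linarith) _)

theorem rpow_sub_one_le_isolationProb {a b α ε : ℝ} {C m : ℕ} (hC : 0 < C) (hm : 0 < m)
    (ha : 0 ≤ a) (hb : 0 ≤ b) (hp : a * Real.log (C * m) / (C * m) ≤ ε)
    (hq : b * Real.log (C * m) / (C * m) ≤ ε) (hε : ε < 1)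
    (hcond : (a + (C - 1) * b) / C ≤ (1 - α) * (1 - ε)) :
    ((C : ℝ) * m) ^ (α - 1) ≤
      isolationProb (a * Real.log (C * m) / (C * m)) (b * Real.log (C * m) / (C * m)) C m := by
  have hC1 : (1 : ℝ) ≤ C := Nat.one_le_cast.mpr hC
  have hm1 : (1 : ℝ) ≤ m := Nat.one_le_cast.mpr hm
  have hL : 0 ≤ Real.log (C * m) := Real.log_nonneg (one_le_mul_of_one_le_of_one_le hC1 hm1)
  have hsum : m * (a * Real.log (C * m) / (C * m)) + (C - 1) * m * (b * Real.log (C * m) / (C * m))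
      = (a + (C - 1) * b) / C * Real.log (C * m) := by
    field_simp
  have hrate : (a + (C - 1) * b) / C / (1 - ε) ≤ 1 - α :=
    (div_le_iff₀ (by linarith)).mpr hcond
  refine le_trans ?_ (exp_neg_le_isolationProb hC (by positivity) hp (by positivity) hq hε)
  rw [hsum, Real.rpow_def_of_pos (by positivity), Real.exp_le_exp,
    mul_div_right_comm]
  nlinarith [mul_le_mul_of_nonneg_right hrate hL]

open Topology in
theorem tendsto_sbm_exists_isoCount_lt {a b α : ℝ} {C : ℕ} (ha : 0 ≤ a) (hb : 0 ≤ b)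
    (hC : 0 < C) (hα : 0 < α) (hcond : (a + (C - 1) * b) / C < 1 - α) :
    Tendsto (fun m : ℕ => sbm (C * m) (a * Real.log (C * m) / (C * m))
        (b * Real.log (C * m) / (C * m)) m
        {ω | ∃ k < C, (isoCount (C * m) m k ω : ℝ) < ((C * m : ℕ) : ℝ) ^ α / (2 * C)})
      atTop (𝓝 0) := by
  have hCpos : (0 : ℝ) < C := Nat.cast_pos.mpr hC
  have hC1 : (1 : ℝ) ≤ C := Nat.one_le_cast.mpr hC
  set c := (a + (C - 1) * b) / C
  have hc : 0 ≤ c := by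
    have : (0 : ℝ) ≤ C - 1 := by linarith
    positivity
  -- `(1 - α) * (1 - ε)` is then the midpoint of `c` and `1 - α`
  set ε := (1 - α - c) / (2 * (1 - α))
  have hε : 0 < ε := div_pos (by linarith) (by linarith)
  have hε2 : ε ≤ 1 / 2 := by rw [div_le_iff₀ (by linarith)]; linarith
  have hcε : c ≤ (1 - α) * (1 - ε) := by
    have : (1 - α) * (1 - ε) = (1 - α + c) / 2 := by
      simp only [ε]; field_simp [show 1 - α ≠ 0 by linarith]; ring
    linarith
  have hN : Tendsto (fun m : ℕ => (C : ℝ) * m) atTop atTop :=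
    tendsto_natCast_atTop_atTop.const_mul_atTop hCpos
  have hlog : Tendsto (fun m : ℕ => Real.log (C * m) / (C * m)) atTop (𝓝 0) := by
    simpa [Function.comp_def] using
      (Real.tendsto_pow_log_div_mul_add_atTop 1 0 1 one_ne_zero).comp hN
  have hp : Tendsto (fun m : ℕ => a * Real.log (C * m) / (C * m)) atTop (𝓝 0) := by
    simpa [mul_div_assoc] using hlog.const_mul a
  have hq : Tendsto (fun m : ℕ => b * Real.log (C * m) / (C * m)) atTop (𝓝 0) := by
    simpa [mul_div_assoc] using hlog.const_mul b
  have hg : Tendsto (fun m : ℕ => (C : ℝ) *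
      (4 * C / ((C : ℝ) * m) ^ α + 8 * (a * Real.log (C * m) / (C * m)))) atTop (𝓝 0) := by
    simpa using ((tendsto_const_nhds.div_atTop ((tendsto_rpow_atTop hα).comp hN)).add
      (hp.const_mul 8)).const_mul (C : ℝ)
  refine tendsto_of_tendsto_of_tendsto_of_le_of_le' tendsto_const_nhds
    (ENNReal.ofReal_zero ▸ ENNReal.tendsto_ofReal hg) (Eventually.of_forall fun _ => zero_le) ?_
  filter_upwards [eventually_gt_atTop 0, hp.eventually (ge_mem_nhds hε),
    hq.eventually (ge_mem_nhds hε)] with m hm hpε hqε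
  have hmR : (0 : ℝ) < m := Nat.cast_pos.mpr hm
  have hL : 0 ≤ Real.log (C * m) :=
    Real.log_nonneg (one_le_mul_of_one_le_of_one_le hC1 (Nat.one_le_cast.mpr hm))
  have hNα : 0 < ((C : ℝ) * m) ^ α := by positivity
  have hρ := rpow_sub_one_le_isolationProb hC hm ha hb hpε hqε (by linarith) hcε
  have hmρ : ((C : ℝ) * m) ^ α / C ≤ m * isolationProb (a * Real.log (C * m) / (C * m))
      (b * Real.log (C * m) / (C * m)) C m := by
    rw [Real.rpow_sub_one (by positivity)] at hρ
    calc ((C : ℝ) * m) ^ α / C = m * (((C : ℝ) * m) ^ α / (C * m)) := by field_simp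
      _ ≤ _ := mul_le_mul_of_nonneg_left hρ hmR.le
  have hT : ((C * m : ℕ) : ℝ) ^ α / (2 * C) = ((C : ℝ) * m) ^ α / C / 2 := by
    push_cast; ring
  refine (sbm_exists_isoCount_lt_le hm (by positivity) (hpε.trans hε2) (by positivity)
    (by linarith) (by linarith)).trans (ENNReal.ofReal_le_ofReal ?_)
  gcongr (C : ℝ) * (?_ + _)
  calc 4 / (m * isolationProb _ _ C m) ≤ 4 / (((C : ℝ) * m) ^ α / C) := by gcongr
    _ = 4 * C / ((C : ℝ) * m) ^ α := by field_simp

theorem eventually_mul_logb_le_logb_rpow_div {α D ε : ℝ} (hα : 0 < α) (hD : D ≠ 0)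
    (hε : 0 < ε) :
    ∀ᶠ x in atTop, (1 - ε) * (α * Real.logb 2 x) ≤ Real.logb 2 (x ^ α / D) := by
  filter_upwards [(Real.tendsto_logb_atTop one_lt_two).eventually_ge_atTop
    (Real.logb 2 D / (ε * α)), eventually_gt_atTop 0] with x hx hx0
  rw [Real.logb_div (Real.rpow_pos_of_pos hx0 α).ne' hD, Real.logb_rpow_eq_mul_logb_of_pos hx0]
  have := (div_le_iff₀ (mul_pos hε hα)).mp hx
  linarith

theorem PMF.toReal_uniformOfFinset_apply_le {α : Type*} {s : Finset α} (hs : s.Nonempty)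
    (a : α) : (PMF.uniformOfFinset s hs a).toReal ≤ (#s : ℝ)⁻¹ := by
  rw [PMF.uniformOfFinset_apply]
  split_ifs <;> simp

theorem stmt_15_general (a b α s1 s2 : ℝ) (C : ℕ) (ha : 0 < a) (hb : 0 < b) (hC : 0 < C)
    (hs1 : 0 < s1) (hs2 : 0 < s2) (hα : 0 < α)
    (hcond : (a + ((C : ℝ) - 1) * b) * s1 * s2 / C < 1 - α) :
    Tendsto (fun m : ℕ =>
      sbm (C * m) (a * s1 * s2 * Real.log (C * m) / (C * m))
          (b * s1 * s2 * Real.log (C * m) / (C * m)) m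
        {ω | ∃ k < C, (isoCount (C * m) m k ω : ℝ) < ((C * m : ℕ) : ℝ) ^ α / (2 * C)})
      atTop (nhds 0) ∧
    (∀ ε > 0, ∀ᶠ m : ℕ in atTop,
      (1 - ε) * (α * Real.logb 2 ((C * m : ℕ) : ℝ)) ≤
        Real.logb 2 (((C * m : ℕ) : ℝ) ^ α / (2 * C))) ∧
    (∀ m : ℕ, 0 < m → ∀ (s : Finset (Fin (C * m))) (hs : s.Nonempty)
        (est : Fin (C * m)),
      ((C * m : ℕ) : ℝ) ^ α / (2 * C) ≤ s.card →
      ((PMF.uniformOfFinset s hs) est).toReal ≤ 2 * C / ((C * m : ℕ) : ℝ) ^ α) := by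
  have hN : Tendsto (fun m : ℕ => ((C * m : ℕ) : ℝ)) atTop atTop :=
    tendsto_natCast_atTop_atTop.comp (tendsto_id.const_mul_atTop' hC)
  refine ⟨?_, fun ε hε => hN.eventually (eventually_mul_logb_le_logb_rpow_div hα
    (by positivity) hε), ?_⟩
  · have hcond' : (a * s1 * s2 + (C - 1) * (b * s1 * s2)) / C < 1 - α := by
      convert hcond using 2; ring
    exact tendsto_sbm_exists_isoCount_lt (by positivity) (by positivity) hC hα hcond'
  · intro m hm s hs est hcard
    have hT : 0 < ((C * m : ℕ) : ℝ) ^ α / (2 * C) := by positivity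
    calc ((PMF.uniformOfFinset s hs) est).toReal ≤ (#s : ℝ)⁻¹ :=
          PMF.toReal_uniformOfFinset_apply_le hs est
      _ ≤ (((C * m : ℕ) : ℝ) ^ α / (2 * C))⁻¹ := inv_anti₀ hT hcard
      _ = 2 * C / ((C * m : ℕ) : ℝ) ^ α := inv_div _ _

/-- Anonymity in the intersection graph: if `(a + (C-1)b) s1 s2 / C < 1 - α` with `α > 0`,
then (i) with probability `1 - o(1)` every community of the intersection graph
`G₁ ∩ G₂ ∼ SBM(n, a s1 s2 log n / n, b s1 s2 log n / n)` (with `n = C·m`) contains at least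
`n^α / (2C)` isolated vertices; (ii) this amounts to `(1-o(1)) α log₂ n` bits of uncertainty;
(iii) under a uniform posterior over any set of at least `n^α/(2C)` mutually confusable
vertices, any estimator of the identity of a given vertex succeeds with probability at most
`2C / n^α`. -/
theorem stmt_15 (a b α s1 s2 : ℝ) (C : ℕ) (ha : 0 < a) (hb : 0 < b) (hC : 0 < C)
    (hs1 : 0 < s1) (hs1' : s1 ≤ 1) (hs2 : 0 < s2) (hs2' : s2 ≤ 1) (hα : 0 < α)
    (hcond : (a + ((C : ℝ) - 1) * b) * s1 * s2 / C < 1 - α) :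
    Tendsto (fun m : ℕ =>
      sbm (C * m) (a * s1 * s2 * Real.log (C * m) / (C * m))
          (b * s1 * s2 * Real.log (C * m) / (C * m)) m
        {ω | ∃ k < C, (isoCount (C * m) m k ω : ℝ) < ((C * m : ℕ) : ℝ) ^ α / (2 * C)})
      atTop (nhds 0) ∧
    (∀ ε > 0, ∀ᶠ m : ℕ in atTop,
      (1 - ε) * (α * Real.logb 2 ((C * m : ℕ) : ℝ)) ≤
        Real.logb 2 (((C * m : ℕ) : ℝ) ^ α / (2 * C))) ∧
    (∀ m : ℕ, 0 < m → ∀ (s : Finset (Fin (C * m))) (hs : s.Nonempty)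
        (est : Fin (C * m)),
      ((C * m : ℕ) : ℝ) ^ α / (2 * C) ≤ s.card →
      ((PMF.uniformOfFinset s hs) est).toReal ≤ 2 * C / ((C * m : ℕ) : ℝ) ^ α) :=
  stmt_15_general a b α s1 s2 C ha hb hC hs1 hs2 hα hcond
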